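/- The function μ ↦ ξ(t,μ) = t[φ(t−μ) + φ(t+μ)] + Φ̄(t−μ) + Φ(−t−μ) is even in μ and nondecreasing for 0 ≤ μ ≤ t. -/

import Mathlib

open MeasureTheory Set

/-- Standard Gaussian density. -/
noncomputable def gphi (v : ℝ) : ℝ := (Real.sqrt (2 * Real.pi))⁻¹ * Real.exp (-v ^ 2 / 2)

/-- Standard Gaussian upper tail probability. -/
noncomputable def PhiBar (v : ℝ) : ℝ := ∫ x in Set.Ioi v, gphi x

/-- Standard Gaussian CDF. -/
noncomputable def Phi (v : ℝ) : ℝ := ∫ x in Set.Iic v, gphi x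

noncomputable def xi (t μ : ℝ) : ℝ :=
  t * (gphi (t - μ) + gphi (t + μ)) + PhiBar (t - μ) + Phi (-t - μ)

/-!
Differentiating, `ξ'(μ) = φ(t - μ) (1 + t (t - μ)) - φ(t + μ) (1 + t (t + μ))`.
Since `φ(t - μ) = e^{2tμ} φ(t + μ) ≥ (1 + 2tμ) φ(t + μ)` and
`(1 + 2tμ)(1 + t (t - μ)) = 1 + t (t + μ) + 2t²μ (t - μ)`, the derivative is nonnegative
for `0 ≤ μ ≤ t`. Evenness comes from `φ(-x) = φ(x)`, which gives `Φ(-x) = Φ̄(x)`.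
-/

section IntegralIic

variable {E : Type*} [NormedAddCommGroup E] [NormedSpace ℝ E]

theorem hasDerivAt_integral_Iic [CompleteSpace E] {f : ℝ → E} (hf : Continuous f)
    (hfi : Integrable f) (v : ℝ) : HasDerivAt (fun u => ∫ x in Iic u, f x) (f v) v := by
  have hsplit : ∀ u, ∫ x in Iic u, f x = (∫ x in Iic 0, f x) + ∫ x in (0 : ℝ)..u, f x :=
    fun u => by
      rw [← intervalIntegral.integral_Iic_sub_Iic hfi.integrableOn hfi.integrableOn]
      abel
  rw [funext hsplit]
  exact (intervalIntegral.integral_hasDerivAt_right hfi.intervalIntegrable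
    (hf.stronglyMeasurableAtFilter _ _) hf.continuousAt).const_add _

theorem integral_Iic_neg_of_even {f : ℝ → E} (hf : ∀ x, f (-x) = f x) (v : ℝ) :
    ∫ x in Iic (-v), f x = ∫ x in Ioi v, f x := by
  rw [← integral_comp_neg_Ioi]
  simp_rw [hf]

end IntegralIic

theorem continuous_gphi : Continuous gphi := by
  unfold gphi; fun_prop

theorem gphi_pos (v : ℝ) : 0 < gphi v := by
  unfold gphi; positivity

theorem gphi_neg (v : ℝ) : gphi (-v) = gphi v := by
  rw [gphi, gphi, neg_sq]

theorem integrable_gphi : Integrable gphi := by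
  have h := (integrable_exp_neg_mul_sq (b := 1 / 2) (by norm_num)).const_mul
    (Real.sqrt (2 * Real.pi))⁻¹
  convert h using 2 with v
  rw [gphi]; ring_nf

theorem hasDerivAt_gphi (v : ℝ) : HasDerivAt gphi (-v * gphi v) v := by
  have hexponent : HasDerivAt (fun x : ℝ => -x ^ 2 / 2) (-v) v :=
    ((hasDerivAt_pow 2 v).neg.div_const 2).congr_deriv (by ring)
  exact (hexponent.exp.const_mul _).congr_deriv (by unfold gphi; ring)

theorem gphi_sub_eq_exp_mul_gphi_add (t μ : ℝ) :
    gphi (t - μ) = Real.exp (2 * t * μ) * gphi (t + μ) := by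
  unfold gphi
  rw [mul_left_comm, ← Real.exp_add]
  ring_nf

theorem Phi_neg (v : ℝ) : Phi (-v) = PhiBar v :=
  integral_Iic_neg_of_even gphi_neg v

theorem hasDerivAt_Phi (v : ℝ) : HasDerivAt Phi (gphi v) v :=
  hasDerivAt_integral_Iic continuous_gphi integrable_gphi v

theorem hasDerivAt_PhiBar (v : ℝ) : HasDerivAt PhiBar (-gphi v) v := by
  have h := (hasDerivAt_Phi (-v)).comp v (hasDerivAt_neg v)
  simp only [Function.comp_def, Phi_neg, gphi_neg] at h
  simpa using h

theorem xi_neg (t μ : ℝ) : xi t (-μ) = xi t μ := by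
  have h₁ : PhiBar (t + μ) = Phi (-t - μ) := by rw [← Phi_neg]; ring_nf
  have h₂ : Phi (-t + μ) = PhiBar (t - μ) := by rw [← Phi_neg]; ring_nf
  simp only [xi, sub_neg_eq_add, ← sub_eq_add_neg, h₁, h₂]
  ring

theorem hasDerivAt_xi (t μ : ℝ) :
    HasDerivAt (xi t)
      (gphi (t - μ) * (1 + t * (t - μ)) - gphi (t + μ) * (1 + t * (t + μ))) μ := by
  have hsub := (hasDerivAt_id μ).const_sub t
  have hadd := (hasDerivAt_id μ).const_add t
  have hneg := (hasDerivAt_id μ).const_sub (-t)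
  have h := ((((hasDerivAt_gphi (t - μ)).comp μ hsub).add
    ((hasDerivAt_gphi (t + μ)).comp μ hadd)).const_mul t).add
    ((hasDerivAt_PhiBar (t - μ)).comp μ hsub) |>.add ((hasDerivAt_Phi (-t - μ)).comp μ hneg)
  refine h.congr_deriv ?_
  rw [show -t - μ = -(t + μ) by ring, gphi_neg]
  ring

theorem deriv_xi_nonneg {t μ : ℝ} (hμ : 0 ≤ μ) (hμt : μ ≤ t) :
    0 ≤ deriv (xi t) μ := by
  rw [(hasDerivAt_xi t μ).deriv]
  have ht : 0 ≤ t := hμ.trans hμt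
  have hexp : 1 + 2 * t * μ ≤ Real.exp (2 * t * μ) := by
    linarith [Real.add_one_le_exp (2 * t * μ)]
  have hfactor : 0 ≤ 1 + t * (t - μ) := by nlinarith
  have hφ := (gphi_pos (t + μ)).le
  refine sub_nonneg.2 ?_
  calc gphi (t + μ) * (1 + t * (t + μ))
      ≤ gphi (t + μ) * ((1 + 2 * t * μ) * (1 + t * (t - μ))) := by
        gcongr
        nlinarith [mul_nonneg (mul_nonneg ht hμ) (mul_nonneg ht (sub_nonneg.2 hμt))]
    _ ≤ gphi (t + μ) * (Real.exp (2 * t * μ) * (1 + t * (t - μ))) := by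
        gcongr
    _ = gphi (t - μ) * (1 + t * (t - μ)) := by
        rw [gphi_sub_eq_exp_mul_gphi_add]; ring

theorem stmt12_general (t : ℝ) :
    (∀ μ : ℝ, xi t (-μ) = xi t μ) ∧ MonotoneOn (xi t) (Set.Icc 0 t) := by
  refine ⟨xi_neg t, ?_⟩
  have hdiff : Differentiable ℝ (xi t) := fun μ => (hasDerivAt_xi t μ).differentiableAt
  refine monotoneOn_of_deriv_nonneg (convex_Icc 0 t) hdiff.continuous.continuousOn
    (hdiff.differentiableOn.mono interior_subset) ?_
  intro μ hμ
  rw [interior_Icc] at hμ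
  exact deriv_xi_nonneg hμ.1.le hμ.2.le

theorem stmt12 (t : ℝ) (ht : 0 < t) :
    (∀ μ : ℝ, xi t (-μ) = xi t μ) ∧ MonotoneOn (xi t) (Set.Icc 0 t) :=
  stmt12_general t
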